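/- arXiv:2405.13840 — 2 statements merged into one kernel-verified Lean document; each statement's English description precedes it below -/
import Mathlib

section
/- Under the same hypotheses (∑_{i=1}^∞ ‖[F_k^i(y)]^{-1}‖₂ ≤ σ uniformly over points y on the orbit, and ‖∂f_k/∂k‖₂ ≤ M), for every n ≥ 1 one has ‖F_k^n(x)·L(x,k) − ∂f_k^n/∂k(x)‖₂ ≤ M·σ, where L(x,k) = ∑_{i=1}^∞ [F_k^i(x)]^{-1} ∂f_k/∂k(f_k^{i−1}(x)). -/
/-- The operator norm on real matrices induced by the Euclidean (ℓ²) norm. -/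
noncomputable def opNorm {n : Type*} [Fintype n] [DecidableEq n]
    (P : Matrix n n ℝ) : ℝ :=
  ‖(Matrix.toEuclideanCLM (𝕜 := ℝ) P : EuclideanSpace ℝ n →L[ℝ] EuclideanSpace ℝ n)‖

/-- The Euclidean norm of a vector. -/
noncomputable def vnorm {n : Type*} [Fintype n] (v : n → ℝ) : ℝ :=
  Real.sqrt (∑ i, v i ^ 2)

/-- The two-parameter Jacobian cocycle: `twoCoc G m i = F_k^i(f_k^m(x))`, the product of the
one-step Jacobians `G j = F_k(f_k^j(x))` over times `m, …, m+i-1`, latest on the left. -/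
def twoCoc {d : ℕ} (G : ℕ → Matrix (Fin d) (Fin d) ℝ) : ℕ → ℕ → Matrix (Fin d) (Fin d) ℝ
  | _, 0 => 1
  | m, (i + 1) => G (m + i) * twoCoc G m i

/-!
Variation of constants: the recursion for `w` gives `w n = F^n ∑_{i<n} (F^{i+1})⁻¹ u i`, so
`F^n L - w n` is `F^n` applied to the tail of the series defining `L`. The cocycle identity
`F^n (F^{n+j+1})⁻¹ = (F^{j+1}(f^n x))⁻¹` turns that tail into the series defining `L` at the point
`f^n x`, whose norm is at most `M σ` by the uniform bound on the orbit.
-/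

open Finset Matrix

theorem Matrix.mulVec_tsum {ι R m n : Type*} [Fintype n] [CommSemiring R] [TopologicalSpace R]
    [IsTopologicalSemiring R] [T2Space R] (P : Matrix m n R) {f : ι → n → R} (hf : Summable f) :
    P *ᵥ ∑' i, f i = ∑' i, P *ᵥ f i :=
  (hf.hasSum.map (mulVecLin P) (continuous_const.matrix_mulVec continuous_id)).tsum_eq.symm

section Norms

variable {n : Type*} [Fintype n]

theorem vnorm_eq_norm_toLp (v : n → ℝ) : vnorm v = ‖(WithLp.toLp 2 v : EuclideanSpace ℝ n)‖ := by
  simp [vnorm, EuclideanSpace.norm_eq]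

theorem vnorm_nonneg (v : n → ℝ) : 0 ≤ vnorm v := Real.sqrt_nonneg _

theorem vnorm_mulVec_le [DecidableEq n] (P : Matrix n n ℝ) (v : n → ℝ) :
    vnorm (P *ᵥ v) ≤ opNorm P * vnorm v := by
  rw [vnorm_eq_norm_toLp, vnorm_eq_norm_toLp, ← toEuclideanCLM_toLp]
  exact (toEuclideanCLM (𝕜 := ℝ) P).le_opNorm _

theorem summable_and_vnorm_tsum_le {f : ℕ → n → ℝ} {a : ℕ → ℝ} (hfa : ∀ i, vnorm (f i) ≤ a i)
    (ha : Summable a) : Summable f ∧ vnorm (∑' i, f i) ≤ ∑' i, a i := by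
  let e := PiLp.continuousLinearEquiv 2 ℝ (fun _ : n => ℝ)
  have hfa' : ∀ i, ‖e.symm (f i)‖ ≤ a i :=
    fun i => (vnorm_eq_norm_toLp (f i)).symm.trans_le (hfa i)
  have hg : Summable fun i => e.symm (f i) := .of_norm_bounded ha hfa'
  refine ⟨e.symm.summable.mp hg, ?_⟩
  rw [vnorm_eq_norm_toLp]
  change ‖e.symm (∑' i, f i)‖ ≤ _
  rw [e.symm.map_tsum]
  exact tsum_of_norm_bounded ha.hasSum hfa'

theorem summable_and_vnorm_tsum_mulVec_le [DecidableEq n] {σ M : ℝ}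
    (P : ℕ → Matrix n n ℝ) (v : ℕ → n → ℝ) (hP : ∀ N, ∑ i ∈ range N, opNorm (P i) ≤ σ)
    (hv : ∀ i, vnorm (v i) ≤ M) :
    Summable (fun i => P i *ᵥ v i) ∧ vnorm (∑' i, P i *ᵥ v i) ≤ M * σ := by
  have hP_summable : Summable fun i => opNorm (P i) :=
    summable_of_sum_range_le (fun _ => norm_nonneg _) hP
  have hM : 0 ≤ M := (vnorm_nonneg _).trans (hv 0)
  obtain ⟨hsummable, hle⟩ := summable_and_vnorm_tsum_le
    (fun i => (vnorm_mulVec_le (P i) (v i)).trans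
      (mul_le_mul_of_nonneg_left (hv i) (norm_nonneg _)))
    (hP_summable.mul_right M)
  refine ⟨hsummable, hle.trans ?_⟩
  rw [tsum_mul_right, mul_comm]
  exact mul_le_mul_of_nonneg_left (hP_summable.tsum_le_of_sum_range_le hP) hM

end Norms

section Cocycle

variable {d : ℕ} (G : ℕ → Matrix (Fin d) (Fin d) ℝ)

theorem twoCoc_add (m a b : ℕ) : twoCoc G m (a + b) = twoCoc G (m + a) b * twoCoc G m a := by
  induction b with
  | zero => simp [twoCoc]
  | succ b ih => rw [← add_assoc, twoCoc, twoCoc, ih, add_assoc, Matrix.mul_assoc]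

theorem twoCoc_mul_inv_twoCoc_add {m a : ℕ} (h : IsUnit (twoCoc G m a)) (b : ℕ) :
    twoCoc G m a * (twoCoc G m (a + b))⁻¹ = (twoCoc G (m + a) b)⁻¹ := by
  rw [twoCoc_add, Matrix.mul_inv_rev, ← Matrix.mul_assoc,
    mul_nonsing_inv _ ((isUnit_iff_isUnit_det _).mp h), Matrix.one_mul]

theorem eq_twoCoc_mulVec_sum_range {u w : ℕ → Fin d → ℝ} (hw0 : w 0 = 0)
    (hwrec : ∀ n, w (n + 1) = G n *ᵥ w n + u n) (hinv : ∀ i, IsUnit (twoCoc G 0 i)) (n : ℕ) :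
    w n = twoCoc G 0 n *ᵥ ∑ i ∈ range n, (twoCoc G 0 (i + 1))⁻¹ *ᵥ u i := by
  induction n with
  | zero => simp [hw0]
  | succ n ih =>
    rw [sum_range_succ, mulVec_add, mulVec_mulVec,
      mul_nonsing_inv _ ((isUnit_iff_isUnit_det _).mp (hinv _)), one_mulVec, hwrec, ih, twoCoc,
      zero_add, ← mulVec_mulVec]

end Cocycle

/-- If `∑_{i=1}^∞ ‖[F_k^i(y)]⁻¹‖₂ ≤ σ` uniformly over points `y` of the orbit, and
`‖∂f_k/∂k‖₂ ≤ M` along the orbit, then for every `n ≥ 1`,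
`‖F_k^n(x) L(x,k) − ∂f_k^n/∂k(x)‖₂ ≤ M σ`, where
`L(x,k) = ∑_{i=1}^∞ [F_k^i(x)]⁻¹ ∂f_k/∂k(f_k^{i-1}(x))`. -/
theorem tail_bound_L {d : ℕ} (σ M : ℝ)
    (G : ℕ → Matrix (Fin d) (Fin d) ℝ) (u : ℕ → Fin d → ℝ) (w : ℕ → Fin d → ℝ)
    (hw0 : w 0 = 0) (hwrec : ∀ n, w (n + 1) = (G n).mulVec (w n) + u n)
    (hinv : ∀ m i : ℕ, IsUnit (twoCoc G m i))
    (hσ : ∀ m mm : ℕ, ∑ i ∈ Finset.range mm, opNorm ((twoCoc G m (i + 1))⁻¹) ≤ σ)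
    (hM : ∀ i : ℕ, vnorm (u i) ≤ M) :
    ∀ n : ℕ, 1 ≤ n →
      vnorm ((twoCoc G 0 n).mulVec
          (∑' i : ℕ, ((twoCoc G 0 (i + 1))⁻¹).mulVec (u i)) - w n) ≤ M * σ := by
  intro n _
  have hsummable : Summable fun i => (twoCoc G 0 (i + 1))⁻¹ *ᵥ u i :=
    (summable_and_vnorm_tsum_mulVec_le (fun i => (twoCoc G 0 (i + 1))⁻¹) u (hσ 0) hM).1
  have htail_summable : Summable fun j => (twoCoc G 0 (j + n + 1))⁻¹ *ᵥ u (j + n) :=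
    (summable_nat_add_iff n).mpr hsummable
  have htail : ∀ j, twoCoc G 0 n *ᵥ (twoCoc G 0 (j + n + 1))⁻¹ *ᵥ u (j + n) =
      (twoCoc G n (j + 1))⁻¹ *ᵥ u (j + n) := fun j => by
    rw [mulVec_mulVec, show j + n + 1 = n + (j + 1) by ring,
      twoCoc_mul_inv_twoCoc_add G (hinv 0 n), zero_add]
  rw [← hsummable.sum_add_tsum_nat_add n, mulVec_add, mulVec_tsum (twoCoc G 0 n) htail_summable,
    ← eq_twoCoc_mulVec_sum_range G hw0 hwrec (hinv 0), add_sub_cancel_left, tsum_congr htail]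
  exact (summable_and_vnorm_tsum_mulVec_le _ _ (hσ n) fun j => hM (j + n)).2
end

section
/- Let f : [0,1] → [0,1], x̄ a fixed point of f, and I an interval adjacent to x̄ with I ⊆ f(I), f|_I invertible, and 1 < |f'(y)| ≤ 1 + ε for all y ∈ I, where ε > 0. Then for any r < ε^{-1} there exist n_r ∈ ℕ and a point z (an (n_r − 1)-fold preimage under f|_I of a point of I) such that ∑_{i=1}^{n_r} |(f^i)'(z)|^{-1} ≥ ∑_{i=1}^{n_r} (1+ε)^{-i} > r; in particular S(z) = ∑_{i=1}^∞ |(f^i)'(z)|^{-1} > r, so S is unbounded on [0,1]. -/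
/-! Along an orbit that stays in `I`, the chain rule makes `(fⁱ)'(z)` a product of `i` factors of
modulus in `(1, 1 + ε]`, so `|(fⁱ)'(z)|⁻¹ ≥ (1 + ε)⁻ⁱ`. Since `I ⊆ f(I)`, orbits staying in `I` for
any prescribed number of steps exist (take iterated preimages), and the geometric series
`∑ (1 + ε)⁻ⁱ` sums to `ε⁻¹ > r`. -/

open Finset

theorem Set.exists_iterate_mem_of_subset_image {α : Type*} {f : α → α} {s : Set α}
    (hne : s.Nonempty) (hsub : s ⊆ f '' s) (n : ℕ) : ∃ z, ∀ j ≤ n, f^[j] z ∈ s := by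
  induction n with
  | zero =>
    obtain ⟨z, hz⟩ := hne
    exact ⟨z, fun j hj => by simpa [Nat.le_zero.mp hj] using hz⟩
  | succ n ih =>
    obtain ⟨z, hz⟩ := ih
    obtain ⟨w, hws, rfl⟩ := hsub (hz 0 n.zero_le)
    refine ⟨w, fun j hj => ?_⟩
    cases j with
    | zero => simpa using hws
    | succ j => simpa only [Function.iterate_succ_apply] using hz j (by omega)

theorem hasDerivAt_iterate_of_forall_lt {𝕜 : Type*} [NontriviallyNormedField 𝕜]
    {f f' : 𝕜 → 𝕜} {z : 𝕜} {n : ℕ}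
    (hd : ∀ j < n, HasDerivAt f (f' (f^[j] z)) (f^[j] z)) :
    HasDerivAt f^[n] (∏ j ∈ range n, f' (f^[j] z)) z := by
  induction n with
  | zero => simpa using hasDerivAt_id z
  | succ n ih =>
    rw [Function.iterate_succ', prod_range_succ, mul_comm]
    exact (hd n n.lt_succ_self).comp z (ih fun j hj => hd j (hj.trans n.lt_succ_self))

theorem inv_pow_le_inv_abs_deriv_iterate {f f' : ℝ → ℝ} {z c : ℝ} {n : ℕ}
    (hd : ∀ j < n, HasDerivAt f (f' (f^[j] z)) (f^[j] z))
    (h0 : ∀ j < n, f' (f^[j] z) ≠ 0) (hc : ∀ j < n, |f' (f^[j] z)| ≤ c) :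
    (c ^ n)⁻¹ ≤ |deriv f^[n] z|⁻¹ := by
  rw [(hasDerivAt_iterate_of_forall_lt hd).deriv, abs_prod]
  refine inv_anti₀ (prod_pos fun j hj => abs_pos.2 (h0 j (mem_range.1 hj))) ?_
  calc ∏ j ∈ range n, |f' (f^[j] z)| ≤ ∏ _j ∈ range n, c :=
        prod_le_prod (fun _ _ => abs_nonneg _) fun j hj => hc j (mem_range.1 hj)
    _ = c ^ n := by rw [prod_const, card_range]

theorem hasSum_inv_one_add_pow_succ {ε : ℝ} (hε : 0 < ε) :
    HasSum (fun i : ℕ => ((1 + ε) ^ (i + 1))⁻¹) ε⁻¹ := by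
  have ha1 : (1 + ε)⁻¹ < 1 := inv_lt_one_of_one_lt₀ (by linarith)
  have h := (hasSum_geometric_of_lt_one (by positivity) ha1).mul_left (1 + ε)⁻¹
  have hsum : (1 + ε)⁻¹ * (1 - (1 + ε)⁻¹)⁻¹ = ε⁻¹ := by
    field_simp
    rw [add_sub_cancel_left, div_self hε.ne']
  simpa only [hsum, ← inv_pow, ← pow_succ'] using h

theorem S_unbounded_near_indifferent_fixed_point_general
    (f : ℝ → ℝ) (f' : ℝ → ℝ) (I : Set ℝ) (ε r : ℝ)
    (hne : I.Nonempty)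
    (hsub : I ⊆ f '' I)
    (hε : 0 < ε)
    (hd : ∀ y ∈ I, HasDerivAt f (f' y) y)
    (hd1 : ∀ y ∈ I, 1 < |f' y|) (hd2 : ∀ y ∈ I, |f' y| ≤ 1 + ε)
    (hr : r < ε⁻¹) :
    ∃ (n : ℕ) (z : ℝ), 1 ≤ n ∧ (∀ j : ℕ, j < n → f^[j] z ∈ I) ∧
      r < ∑ i ∈ Finset.range n, ((1 + ε) ^ (i + 1))⁻¹ ∧
      (∑ i ∈ Finset.range n, ((1 + ε) ^ (i + 1))⁻¹
        ≤ ∑ i ∈ Finset.range n, |deriv (f^[i + 1]) z|⁻¹) ∧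
      r < ∑ i ∈ Finset.range n, |deriv (f^[i + 1]) z|⁻¹ := by
  obtain ⟨n, hn1, hnr⟩ := ((Filter.eventually_ge_atTop 1).and
    ((hasSum_inv_one_add_pow_succ hε).tendsto_sum_nat.eventually (eventually_gt_nhds hr))).exists
  obtain ⟨z, hz⟩ := Set.exists_iterate_mem_of_subset_image hne hsub (n - 1)
  have horbit : ∀ j < n, f^[j] z ∈ I := fun j hj => hz j (by omega)
  have hle : ∑ i ∈ range n, ((1 + ε) ^ (i + 1))⁻¹ ≤ ∑ i ∈ range n, |deriv f^[i + 1] z|⁻¹ := by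
    refine sum_le_sum fun i hi => ?_
    have hi' : ∀ j < i + 1, f^[j] z ∈ I := fun j hj => horbit j (hj.trans_le (mem_range.1 hi))
    exact inv_pow_le_inv_abs_deriv_iterate (fun j hj => hd _ (hi' j hj))
      (fun j hj => abs_pos.1 (one_pos.trans (hd1 _ (hi' j hj)))) (fun j hj => hd2 _ (hi' j hj))
  exact ⟨n, z, hn1, horbit, hnr, hle, hnr.trans_le hle⟩

/-- Failure of condition `C₁` near an indifferent fixed point: let `x̄` be a fixed point of
`f : [0,1] → [0,1]` and `I` a nonempty interval adjacent to `x̄` with `I ⊆ f(I)`, `f`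
injective on `I`, and `1 < |f'(y)| ≤ 1 + ε` on `I`. Then for any `r < ε⁻¹` there exist
`n_r` and a point `z` whose orbit stays in `I` for the first `n_r` steps (an `(n_r−1)`-fold
preimage under `f|_I` of a point of `I`) with
`∑_{i=1}^{n_r} |(fⁱ)'(z)|⁻¹ ≥ ∑_{i=1}^{n_r} (1+ε)^{-i} > r`; in particular
`S(z) = ∑_{i=1}^∞ |(fⁱ)'(z)|⁻¹ > r`, so `S` is unbounded. -/
theorem S_unbounded_near_indifferent_fixed_point
    (f : ℝ → ℝ) (f' : ℝ → ℝ) (xbar : ℝ) (I : Set ℝ) (ε r : ℝ)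
    (hmap : Set.MapsTo f (Set.Icc 0 1) (Set.Icc 0 1))
    (hI : I ⊆ Set.Icc (0:ℝ) 1) (hne : I.Nonempty)
    (hfix : f xbar = xbar)
    (hsub : I ⊆ f '' I) (hinj : Set.InjOn f I)
    (hε : 0 < ε)
    (hd : ∀ y ∈ I, HasDerivAt f (f' y) y)
    (hd1 : ∀ y ∈ I, 1 < |f' y|) (hd2 : ∀ y ∈ I, |f' y| ≤ 1 + ε)
    (hr : r < ε⁻¹) :
    ∃ (n : ℕ) (z : ℝ), 1 ≤ n ∧ (∀ j : ℕ, j < n → f^[j] z ∈ I) ∧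
      r < ∑ i ∈ Finset.range n, ((1 + ε) ^ (i + 1))⁻¹ ∧
      (∑ i ∈ Finset.range n, ((1 + ε) ^ (i + 1))⁻¹
        ≤ ∑ i ∈ Finset.range n, |deriv (f^[i + 1]) z|⁻¹) ∧
      r < ∑ i ∈ Finset.range n, |deriv (f^[i + 1]) z|⁻¹ :=
  S_unbounded_near_indifferent_fixed_point_general f f' I ε r hne hsub hε hd hd1 hd2 hr
end
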